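/- If a finite simple graph G = (V, E) has nested solutions (NS), then δ_G(i+1) − δ_G(i) ≤ 1 for all i ∈ {1, …, |V| − 1}. -/

import Mathlib

open Finset
open scoped Classical

/-- Number of edges of `G` with both endpoints in `A`. -/
noncomputable def edgesIn {V : Type*} [Fintype V] (G : SimpleGraph V) (A : Finset V) : ℕ :=
  (G.edgeFinset.filter (fun e => ∀ v ∈ e, v ∈ A)).card

/-- `I_G(m)`: maximum number of induced edges over all `m`-subsets. -/
noncomputable def maxEdgesIn {V : Type*} [Fintype V] (G : SimpleGraph V) (m : ℕ) : ℕ :=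
  (Finset.univ.powersetCard m).sup (edgesIn G)

/-- The `δ`-sequence of `G`. -/
noncomputable def deltaSeq {V : Type*} [Fintype V] (G : SimpleGraph V) (m : ℕ) : ℤ :=
  (maxEdgesIn G m : ℤ) - (maxEdgesIn G (m - 1) : ℤ)

/-- `G` has nested solutions. -/
def hasNS {V : Type*} [Fintype V] (G : SimpleGraph V) : Prop :=
  ∃ A : ℕ → Finset V,
    (∀ i, 1 ≤ i → i < Fintype.card V → A i ⊆ A (i + 1)) ∧
    (∀ i, 1 ≤ i → i ≤ Fintype.card V →
      (A i).card = i ∧ edgesIn G (A i) = maxEdgesIn G i)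

/-- `G` is `δ`-dense. -/
def deltaDense {V : Type*} [Fintype V] (G : SimpleGraph V) : Prop :=
  ∀ i, 2 ≤ i → i ≤ Fintype.card V → deltaSeq G i ≤ deltaSeq G (i - 1) → 2 ≤ deltaSeq G i

/-- The `d`-th cartesian power of `G`. -/
def cartPower {V : Type*} (G : SimpleGraph V) (d : ℕ) : SimpleGraph (Fin d → V) where
  Adj x y := ∃ i, G.Adj (x i) (y i) ∧ ∀ j, j ≠ i → x j = y j
  symm := by
    constructor
    rintro x y ⟨i, h, hj⟩
    exact ⟨i, h.symm, fun j hje => (hj j hje).symm⟩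
  loopless := by
    constructor
    rintro x ⟨i, h, -⟩
    exact G.loopless.irrefl _ h

/-- The initial segment `{0, …, k-1}` of `Fin N`. -/
def finSeg (N k : ℕ) : Finset (Fin N) :=
  Finset.univ.filter (fun v => (v : ℕ) < k)

/-- The set of the first `m` elements under a (strict total) order `r`. -/
noncomputable def initSeg {α : Type*} [Fintype α] (r : α → α → Prop) (m : ℕ) : Finset α :=
  Finset.univ.filter (fun u => (Finset.univ.filter (fun w => r w u)).card < m)

/-- Strict lexicographic order on tuples. -/
def lexLt {n N : ℕ} (x y : Fin n → Fin N) : Prop :=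
  ∃ i, (∀ j, j < i → x j = y j) ∧ x i < y i

/-- Strict colexicographic order on tuples. -/
def colexLt {n N : ℕ} (x y : Fin n → Fin N) : Prop :=
  ∃ i, (∀ j, i < j → x j = y j) ∧ x i < y i

/-- Strict lexicographic order on pairs. -/
def lexPair {N : ℕ} (p q : Fin N × Fin N) : Prop :=
  p.1 < q.1 ∨ (p.1 = q.1 ∧ p.2 < q.2)

/-- Strict colexicographic order on pairs. -/
def colexPair {N : ℕ} (p q : Fin N × Fin N) : Prop :=
  p.2 < q.2 ∨ (p.2 = q.2 ∧ p.1 < q.1)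

/-- A subset of `Fin M × Fin N` is compressed. -/
def IsCompressed {M N : ℕ} (A : Finset (Fin M × Fin N)) : Prop :=
  (∀ a : Fin M, ∀ y y' : Fin N, (a, y) ∈ A → y' ≤ y → (a, y') ∈ A) ∧
  (∀ b : Fin N, ∀ x x' : Fin M, (x, b) ∈ A → x' ≤ x → (x', b) ∈ A)

/-- Number of boundary edges: edges with exactly one endpoint in `A`. -/
noncomputable def edgesBd {V : Type*} [Fintype V] (G : SimpleGraph V) (A : Finset V) : ℕ :=
  (G.edgeFinset.filter (fun e => ∃ u ∈ e, ∃ v ∈ e, u ∈ A ∧ v ∉ A)).card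

/-!
Let `B ⊂ A i ⊂ A (i + 1)` be optimal sets of sizes `i - 1`, `i`, `i + 1` from the chain (with
`B = ∅` when `i = 1`), so `A i = B ∪ {z}` and `A (i + 1) = B ∪ {x, z}`. Every edge inside
`B ∪ {x, z}` but not inside `B` lies inside `B ∪ {x}` or `B ∪ {z}`, except possibly `xz`; hence
`I(i + 1) + I(i - 1) ≤ e(B ∪ {x}) + e(B ∪ {z}) + 1 ≤ 2 I(i) + 1`, which is `δ(i + 1) - δ(i) ≤ 1`.
-/

section

variable {V : Type*} [Fintype V] (G : SimpleGraph V)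

lemma edgesIn_insert {A : Finset V} {x : V} (hx : x ∉ A) :
    edgesIn G (insert x A) = edgesIn G A + #(A.filter (G.Adj x)) := by
  have hsplit : G.edgeFinset.filter (fun e => ∀ v ∈ e, v ∈ insert x A) =
      (G.edgeFinset.filter (fun e => ∀ v ∈ e, v ∈ A)).disjUnion
        ((A.filter (G.Adj x)).map (Sym2.mkEmbedding x)) (by
          simp only [disjoint_left, mem_filter, mem_map, not_exists, not_and]
          rintro _ ⟨-, he⟩ y - rfl
          exact hx (he x (Sym2.mem_mk_left x y))) := by
    ext e
    induction e using Sym2.ind with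
    | _ u v =>
      simp only [mem_filter, mem_disjUnion, mem_map, SimpleGraph.mem_edgeFinset,
        SimpleGraph.mem_edgeSet, Sym2.mem_iff, Sym2.mkEmbedding_apply, forall_eq_or_imp,
        forall_eq, mem_insert]
      constructor
      · rintro ⟨huv, hu | hu, hv | hv⟩
        · exact absurd (hu ▸ hv ▸ huv) (G.loopless.irrefl _)
        · subst hu; exact Or.inr ⟨v, ⟨hv, huv⟩, rfl⟩
        · subst hv; exact Or.inr ⟨u, ⟨hu, huv.symm⟩, Sym2.eq_swap⟩
        · exact Or.inl ⟨huv, hu, hv⟩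
      · rintro (⟨huv, hu, hv⟩ | ⟨y, ⟨hy, hxy⟩, he⟩)
        · exact ⟨huv, Or.inr hu, Or.inr hv⟩
        · rcases Sym2.eq_iff.mp he with ⟨rfl, rfl⟩ | ⟨rfl, rfl⟩
          · exact ⟨hxy, Or.inl rfl, Or.inr hy⟩
          · exact ⟨hxy.symm, Or.inr hy, Or.inl rfl⟩
  rw [edgesIn, edgesIn, hsplit, card_disjUnion, card_map]

lemma edgesIn_empty : edgesIn G ∅ = 0 := by
  simp only [edgesIn, card_eq_zero, filter_eq_empty_iff, notMem_empty, imp_false]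
  intro e _ h
  exact h _ (Sym2.out_fst_mem e)

lemma maxEdgesIn_zero : maxEdgesIn G 0 = 0 := by
  rw [maxEdgesIn, powersetCard_zero, sup_singleton, edgesIn_empty]

lemma edgesIn_le_maxEdgesIn (A : Finset V) : edgesIn G A ≤ maxEdgesIn G #A :=
  le_sup (mem_powersetCard.mpr ⟨subset_univ A, rfl⟩)

lemma edgesIn_insert_insert_add_le {B : Finset V} {x z : V} (hz : z ∉ B) (hxz : x ≠ z) :
    edgesIn G (insert x (insert z B)) + edgesIn G B ≤
      edgesIn G (insert x B) + edgesIn G (insert z B) + 1 := by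
  have hz' : z ∉ insert x B := by simp [hz, hxz.symm]
  have hnbr : #((insert x B).filter (G.Adj z)) ≤ #(B.filter (G.Adj z)) + 1 := by
    rw [filter_insert]
    split_ifs
    exacts [card_insert_le _ _, Nat.le_succ _]
  rw [insert_comm, edgesIn_insert G hz', edgesIn_insert G hz]
  omega

end

/-- If `G` has nested solutions then
`δ_G(i+1) - δ_G(i) ≤ 1` for all `i ∈ {1, …, |V| - 1}`. -/
theorem stmt_1 {V : Type*} [Fintype V] (G : SimpleGraph V) (hNS : hasNS G)
    (i : ℕ) (hi1 : 1 ≤ i) (hi2 : i ≤ Fintype.card V - 1) :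
    deltaSeq G (i + 1) - deltaSeq G i ≤ 1 := by
  obtain ⟨A, hchain, hopt⟩ := hNS
  obtain ⟨hAi_card, hAi_opt⟩ := hopt i hi1 (by omega)
  obtain ⟨hAi1_card, hAi1_opt⟩ := hopt (i + 1) (by omega) (by omega)
  obtain ⟨B, hBA, hB_card, hB_opt⟩ :
      ∃ B ⊆ A i, #B = i - 1 ∧ edgesIn G B = maxEdgesIn G (i - 1) := by
    obtain rfl | hi := hi1.eq_or_lt
    · exact ⟨∅, empty_subset _, rfl, by rw [edgesIn_empty, maxEdgesIn_zero]⟩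
    · obtain ⟨hc, hm⟩ := hopt (i - 1) (by omega) (by omega)
      refine ⟨A (i - 1), ?_, hc, hm⟩
      simpa [Nat.sub_add_cancel hi1] using hchain (i - 1) (by omega) (by omega)
  obtain ⟨z, hzB, hAz⟩ := exists_eq_insert_iff.mpr ⟨hBA, by omega⟩
  obtain ⟨x, hxA, hAx⟩ := exists_eq_insert_iff.mpr ⟨hchain i hi1 (by omega), by omega⟩
  have hxB : x ∉ B := fun h => hxA (hBA h)
  have hxz : x ≠ z := by rintro rfl; exact hxA (hAz ▸ mem_insert_self x B)
  have hxB_le : edgesIn G (insert x B) ≤ maxEdgesIn G i := by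
    simpa [card_insert_of_notMem hxB, hB_card, Nat.sub_add_cancel hi1] using
      edgesIn_le_maxEdgesIn G (insert x B)
  have key := edgesIn_insert_insert_add_le G hzB hxz
  rw [hAz, hAx] at key
  simp only [deltaSeq, Nat.add_sub_cancel]
  omega
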